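/- arXiv:2407.19777 — 6 statements merged into one kernel-verified Lean document; each statement's English description precedes it below -/
import Mathlib

section
/- Consider the lower-bound construction with integers u > d ≥ 1 and real 0 < α < 1, and set τ := (1-α)·d/u. If g ∈ H satisfies |{i : g(x_i) = -1 and h(x_i) = -1}| ≤ d/2, then er_{D_h}(g) ≥ τ + α·d/(2u). -/
open MeasureTheory

abbrev Label : Type := ↥({-1, 1} : Finset ℤ)

def lneg : Label := ⟨-1, by decide⟩
def lpos : Label := ⟨1, by decide⟩

noncomputable def erD {X : Type*} [MeasurableSpace X]
    (D : Measure (X × Label)) (h : X → Label) : ℝ :=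
  (D {p | h p.1 ≠ p.2}).toReal

/-- The distribution `D_h` of the lower-bound construction: every example is labeled `1`;
a point `i` with `h i = -1` has probability `(1-α)/u`, and a point `i` with `h i = 1`
has probability `(1-(1-α)d/u)/(u-d)`. -/
noncomputable def Dh (u d : ℕ) (α : ℝ) (h : Fin u → Label) : Measure (Fin u × Label) :=
  Measure.sum fun i : Fin u =>
    (ENNReal.ofReal (if h i = lneg then (1 - α) / (u : ℝ)
        else (1 - (1 - α) * (d : ℝ) / (u : ℝ)) / ((u : ℝ) - (d : ℝ)))) •
      Measure.dirac (i, lpos)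

/-- Membership in the hypothesis class of the lower-bound construction:
`h` takes the value `-1` on exactly `d` points. -/
def memH (u d : ℕ) (h : Fin u → Label) : Prop :=
  (Finset.univ.filter fun i => h i = lneg).card = d

/-!
Under `D_h` every example is labeled `1`, so the error of `g` is the mass of the `d` points that
`g` labels `-1`. A `-1`-point of `h` has mass `(1-α)/u`, any other point has the larger mass
`(1-α)/u + α/(u-d) ≥ (1-α)/u + α/u`; if at most `d/2` of the `-1`-points of `g` are `-1`-points
of `h`, at least `d/2` of them carry the extra `α/u`.
-/

open Finset

lemma ne_lpos_iff_eq_lneg (l : Label) : l ≠ lpos ↔ l = lneg := by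
  revert l; decide

lemma erD_sum_dirac_lpos {ι : Type*} [Fintype ι] [MeasurableSpace ι]
    [MeasurableSingletonClass ι] (w : ι → ℝ) (hw : ∀ i, 0 ≤ w i) (g : ι → Label) :
    erD (Measure.sum fun i => ENNReal.ofReal (w i) • Measure.dirac (i, lpos)) g =
      ∑ i with g i = lneg, w i := by
  have hmeas : MeasurableSet {p : ι × Label | g p.1 ≠ p.2} := (Set.toFinite _).measurableSet
  have hmass : ∀ i, (ENNReal.ofReal (w i) • Measure.dirac (i, lpos)) {p | g p.1 ≠ p.2} =
      ENNReal.ofReal (if g i = lneg then w i else 0) := fun i => by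
    simp only [Measure.smul_apply, Measure.dirac_apply' _ hmeas, smul_eq_mul,
      Set.indicator_apply, Set.mem_ofPred_eq, ne_lpos_iff_eq_lneg]
    split_ifs <;> simp
  have hnonneg : ∀ i ∈ univ, 0 ≤ if g i = lneg then w i else 0 := fun i _ => by
    split_ifs <;> simp [hw]
  rw [erD, Measure.sum_apply _ hmeas, tsum_fintype, sum_congr rfl fun i _ => hmass i,
    ← ENNReal.ofReal_sum_of_nonneg hnonneg, ENNReal.toReal_ofReal (sum_nonneg hnonneg),
    sum_filter]

section Masses

variable (u d : ℕ) (α : ℝ)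

noncomputable def negMass : ℝ := (1 - α) / u

noncomputable def posMass : ℝ := (1 - (1 - α) * d / u) / ((u : ℝ) - d)

variable {u d α}

lemma negMass_nonneg (hα1 : α < 1) : 0 ≤ negMass u α :=
  div_nonneg (by linarith) (Nat.cast_nonneg u)

lemma posMass_eq (hdu : d < u) : posMass u d α = negMass u α + α / ((u : ℝ) - d) := by
  have hu : (u : ℝ) ≠ 0 := Nat.cast_ne_zero.2 (by omega)
  have hud : (u : ℝ) - d ≠ 0 := sub_ne_zero.2 (by exact_mod_cast hdu.ne')
  rw [posMass, negMass]
  field_simp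
  ring

lemma posMass_nonneg (hdu : d < u) (hα0 : 0 ≤ α) (hα1 : α < 1) : 0 ≤ posMass u d α := by
  have hud : (0 : ℝ) < u - d := sub_pos.2 (by exact_mod_cast hdu)
  rw [posMass_eq hdu]
  exact add_nonneg (negMass_nonneg hα1) (div_nonneg hα0 hud.le)

lemma erD_Dh (h g : Fin u → Label) (hdu : d < u) (hα0 : 0 ≤ α) (hα1 : α < 1) :
    erD (Dh u d α h) g =
      #{i | g i = lneg ∧ h i = lneg} * negMass u α +
        #{i | g i = lneg ∧ ¬h i = lneg} * posMass u d α := by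
  have hw : ∀ i, 0 ≤ if h i = lneg then negMass u α else posMass u d α := fun i => by
    split_ifs
    exacts [negMass_nonneg hα1, posMass_nonneg hdu hα0 hα1]
  rw [Dh, ← negMass, ← posMass, erD_sum_dirac_lpos _ hw, sum_ite, filter_filter, filter_filter,
    sum_const, sum_const, nsmul_eq_mul, nsmul_eq_mul]

end Masses

theorem fail_implies_large_error_general (u d : ℕ) (α : ℝ) (h g : Fin u → Label)
    (hdu : d < u) (hα0 : 0 < α) (hα1 : α < 1)
    (hg : memH u d g)
    (hfail : ((Finset.univ.filter fun i => g i = lneg ∧ h i = lneg).card : ℝ) ≤ (d : ℝ) / 2) :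
    (1 - α) * (d : ℝ) / (u : ℝ) + α * (d : ℝ) / (2 * (u : ℝ)) ≤ erD (Dh u d α h) g := by
  have hud : (0 : ℝ) < u - d := sub_pos.2 (by exact_mod_cast hdu)
  rw [erD_Dh h g hdu hα0.le hα1, posMass_eq hdu, negMass]
  set a := #{i | g i = lneg ∧ h i = lneg}
  set b := #{i | g i = lneg ∧ ¬h i = lneg}
  have hab : (a : ℝ) + b = d := by
    rw [← hg, ← card_filter_add_card_filter_not (fun i => h i = lneg), filter_filter,
      filter_filter, Nat.cast_add]
  have hb : (d : ℝ) / 2 ≤ b := by linarith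
  calc (1 - α) * d / u + α * d / (2 * u) = d * ((1 - α) / u) + d / 2 * (α / u) := by ring
    _ ≤ d * ((1 - α) / u) + b * (α / (u - d)) := by gcongr; linarith [Nat.cast_nonneg (α := ℝ) d]
    _ = a * ((1 - α) / u) + b * ((1 - α) / u + α / (u - d)) := by rw [← hab]; ring

/-- if a hypothesis `g ∈ H` agrees with `h` on at most `d/2` of the
`-1`-points of `h`, then its error under `D_h` is at least `τ + α·d/(2u)` (Observation 2). -/
theorem fail_implies_large_error (u d : ℕ) (α : ℝ) (h g : Fin u → Label)
    (hd : 1 ≤ d) (hdu : d < u) (hα0 : 0 < α) (hα1 : α < 1)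
    (hh : memH u d h) (hg : memH u d g)
    (hfail : ((Finset.univ.filter fun i => g i = lneg ∧ h i = lneg).card : ℝ) ≤ (d : ℝ) / 2) :
    (1 - α) * (d : ℝ) / (u : ℝ) + α * (d : ℝ) / (2 * (u : ℝ)) ≤ erD (Dh u d α h) g :=
  fail_implies_large_error_general u d α h g hdu hα0 hα1 hg hfail
end

section
/- There is a universal constant C' > 2 with the following property. Consider the lower-bound construction with integers u > d ≥ 1, real 0 < α < 1, and sample size n. For any proper learning algorithm A : (X × {-1,1})^n → H, if α ≤ min{ sqrt( u·ln(u/d) / (C'·n) ), 1/C' } and d·C' ≤ u ≤ n/C', then with probability at least 1/16 over a uniformly random h from H and a sample S of n i.i.d. draws from D_h, the hypothesis g = A(S) satisfies |{i : g(x_i) = -1 and h(x_i) = -1}| ≤ d/2. -/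
open MeasureTheory
open scoped ENNReal

/-- The hypothesis class of the lower-bound construction, as a finset:
all functions taking the value `-1` on exactly `d` points. -/
noncomputable def Hfin (u d : ℕ) : Finset (Fin u → Label) :=
  Finset.univ.filter fun h => (Finset.univ.filter fun i => h i = lneg).card = d

/-!
Fix a sample `S`. The learner's output `A S` is a `d`-set, and at most
`C(d, k) C(u, d - k) ≤ 2^d (d/(u-d))^k |H|` of the `d`-sets `h` meet it in `k = ⌊d/2⌋ + 1` or
more points. Cauchy–Schwarz over the pairs `(h, S)` therefore bounds the square of
`∑_h D_h^n (overlap ≥ k)` by `2^d (d/(u-d))^k |H|` times `∑_h (u ∑_i D_h(i)²)^n`, and the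
second moment is `u ∑_i D_h(i)² = 1 + dα²/(u-d) ≤ exp (dα²/(u-d))`. For `C' = 100` we have
`nα² ≤ u log(u/d)/100`, so the product is at most `(4 √(du) / (u-d))^k |H|² ≤ (4/5)^k |H|²`:
the learner succeeds on average with probability at most `√(4/5) < 15/16`.
-/

open Finset

theorem sq_sum_ite_le_card_filter_mul_sum_sq {ι : Type*} (s : Finset ι) (p : ι → Prop)
    [DecidablePred p] (g : ι → ℝ) :
    (∑ i ∈ s, if p i then g i else 0) ^ 2 ≤ #{i ∈ s | p i} * ∑ i ∈ s, g i ^ 2 := by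
  rw [← sum_filter]
  calc (∑ i ∈ s with p i, g i) ^ 2 ≤ #{i ∈ s | p i} * ∑ i ∈ s with p i, g i ^ 2 :=
        sq_sum_le_card_mul_sum_sq
    _ ≤ #{i ∈ s | p i} * ∑ i ∈ s, g i ^ 2 := mul_le_mul_of_nonneg_left
        (sum_le_sum_of_subset_of_nonneg (filter_subset p s) fun i _ _ => sq_nonneg (g i))
        (Nat.cast_nonneg _)

theorem sq_sum_sum_ite_prod_le {ι Y : Type*} [Fintype Y] {n : ℕ} (H : Finset ι) (P : ι → Y → ℝ)
    (bad : (Fin n → Y) → ι → Prop) [∀ s, DecidablePred (bad s)] (N : ℕ)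
    (hN : ∀ s, #{h ∈ H | bad s h} ≤ N) :
    (∑ h ∈ H, ∑ s, if bad s h then ∏ j, P h (s j) else 0) ^ 2
      ≤ N * ∑ h ∈ H, (Fintype.card Y * ∑ y, P h y ^ 2) ^ n := by
  have hcard :
      #{x ∈ H ×ˢ (univ : Finset (Fin n → Y)) | bad x.2 x.1} ≤ Fintype.card Y ^ n * N := by
    rw [card_filter, sum_product, sum_comm]
    simp only [← card_filter]
    calc ∑ s : Fin n → Y, #{h ∈ H | bad s h} ≤ ∑ _s : Fin n → Y, N :=
          sum_le_sum fun s _ => hN s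
      _ = Fintype.card Y ^ n * N := by simp
  calc (∑ h ∈ H, ∑ s, if bad s h then ∏ j, P h (s j) else 0) ^ 2
      = (∑ x ∈ H ×ˢ (univ : Finset (Fin n → Y)),
          if bad x.2 x.1 then ∏ j, P x.1 (x.2 j) else 0) ^ 2 := by
        rw [sum_product]
    _ ≤ #{x ∈ H ×ˢ (univ : Finset (Fin n → Y)) | bad x.2 x.1} *
          ∑ x ∈ H ×ˢ (univ : Finset (Fin n → Y)), (∏ j, P x.1 (x.2 j)) ^ 2 :=
        sq_sum_ite_le_card_filter_mul_sum_sq _ _ _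
    _ ≤ (Fintype.card Y ^ n * N : ℕ) * ∑ h ∈ H, (∑ y, P h y ^ 2) ^ n := by
        rw [sum_product]
        simp only [Fintype.sum_pow, prod_pow]
        gcongr
    _ = N * ∑ h ∈ H, (Fintype.card Y * ∑ y, P h y ^ 2) ^ n := by
        simp only [mul_pow, ← mul_sum]
        push_cast
        ring

theorem card_powersetCard_filter_le_choose_mul_choose {α : Type*} [DecidableEq α]
    (s G : Finset α) (d k : ℕ) :
    #{T ∈ powersetCard d s | k ≤ #(G ∩ T)} ≤ (#G).choose k * (#s).choose (d - k) := by
  calc #{T ∈ powersetCard d s | k ≤ #(G ∩ T)}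
      ≤ #((powersetCard k G ×ˢ powersetCard (d - k) s).image fun KR => KR.1 ∪ KR.2) := by
        refine card_le_card fun T hT => ?_
        obtain ⟨hT, hk⟩ := mem_filter.1 hT
        obtain ⟨hTs, hTd⟩ := mem_powersetCard.1 hT
        obtain ⟨K, hKGT, hKk⟩ := exists_subset_card_eq hk
        have hKT : K ⊆ T := hKGT.trans inter_subset_right
        refine mem_image.2 ⟨(K, T \ K), ?_, union_sdiff_of_subset hKT⟩
        simp only [mem_product, mem_powersetCard]
        exact ⟨⟨hKGT.trans inter_subset_left, hKk⟩, sdiff_subset.trans hTs,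
          by rw [card_sdiff_of_subset hKT, hTd, hKk]⟩
    _ ≤ (#G).choose k * (#s).choose (d - k) := by
        refine card_image_le.trans ?_
        rw [card_product, card_powersetCard, card_powersetCard]

theorem Nat.choose_mul_sub_le_choose_succ_mul {u d j : ℕ} (hj : j < d) :
    u.choose j * (u - d) ≤ u.choose (j + 1) * d :=
  calc u.choose j * (u - d) ≤ u.choose j * (u - j) := Nat.mul_le_mul_left _ (by omega)
    _ = u.choose (j + 1) * (j + 1) := (Nat.choose_succ_right_eq u j).symm
    _ ≤ u.choose (j + 1) * d := Nat.mul_le_mul_left _ hj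

theorem Nat.choose_sub_mul_pow_le {u d i : ℕ} (hi : i ≤ d) :
    u.choose (d - i) * (u - d) ^ i ≤ u.choose d * d ^ i := by
  induction i with
  | zero => simp
  | succ i ih =>
    calc u.choose (d - (i + 1)) * (u - d) ^ (i + 1)
        = u.choose (d - (i + 1)) * (u - d) * (u - d) ^ i := by ring
      _ ≤ u.choose (d - (i + 1) + 1) * d * (u - d) ^ i :=
        Nat.mul_le_mul_right _ (Nat.choose_mul_sub_le_choose_succ_mul (by omega))
      _ = d * (u.choose (d - i) * (u - d) ^ i) := by
        rw [show d - (i + 1) + 1 = d - i by omega]; ring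
      _ ≤ d * (u.choose d * d ^ i) := Nat.mul_le_mul_left d (ih (by omega))
      _ = u.choose d * d ^ (i + 1) := by ring

theorem Label.eq_lneg_or_eq_lpos : ∀ l : Label, l = lneg ∨ l = lpos := by decide

theorem lpos_ne_lneg : lpos ≠ lneg := by decide

def negSet {u : ℕ} (h : Fin u → Label) : Finset (Fin u) := {i | h i = lneg}

theorem mem_Hfin {u d : ℕ} {h : Fin u → Label} : h ∈ Hfin u d ↔ #(negSet h) = d := by
  simp [Hfin, negSet]

theorem negSet_injective (u : ℕ) : Function.Injective (negSet (u := u)) := by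
  intro h h' e
  funext i
  have hi : h i = lneg ↔ h' i = lneg := by simpa [negSet] using congrArg (i ∈ ·) e
  rcases Label.eq_lneg_or_eq_lpos (h i) with h1 | h1 <;>
    rcases Label.eq_lneg_or_eq_lpos (h' i) with h2 | h2 <;> simp_all [lpos_ne_lneg]

theorem image_negSet_Hfin (u d : ℕ) : (Hfin u d).image negSet = powersetCard d univ := by
  ext T
  simp only [mem_image, mem_powersetCard, subset_univ, true_and]
  constructor
  · rintro ⟨h, hh, rfl⟩
    exact mem_Hfin.1 hh
  · intro hT
    have hneg : negSet (fun i => if i ∈ T then lneg else lpos) = T := by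
      ext i
      by_cases hi : i ∈ T <;> simp [negSet, hi, lpos_ne_lneg]
    exact ⟨_, mem_Hfin.2 (by rw [hneg]; exact hT), hneg⟩

theorem card_Hfin (u d : ℕ) : #(Hfin u d) = u.choose d := by
  rw [← card_image_of_injective _ (negSet_injective u), image_negSet_Hfin, card_powersetCard,
    card_univ, Fintype.card_fin]

theorem card_Hfin_filter_le_choose_mul_choose {u d : ℕ} (G : Finset (Fin u)) (hG : #G = d)
    (k : ℕ) : #{h ∈ Hfin u d | k ≤ #(G ∩ negSet h)} ≤ d.choose k * u.choose (d - k) :=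
  calc #{h ∈ Hfin u d | k ≤ #(G ∩ negSet h)}
      ≤ #{T ∈ powersetCard d univ | k ≤ #(G ∩ T)} := by
        refine card_le_card_of_injOn negSet (fun h hh => ?_) (negSet_injective u).injOn
        rw [coe_filter] at hh
        rw [coe_filter, ← image_negSet_Hfin]
        exact ⟨mem_image_of_mem _ hh.1, hh.2⟩
    _ ≤ d.choose k * u.choose (d - k) := by
        simpa [hG] using card_powersetCard_filter_le_choose_mul_choose univ G d k

noncomputable def dhWeight (u d : ℕ) (α : ℝ) (h : Fin u → Label) (i : Fin u) : ℝ :=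
  if h i = lneg then (1 - α) / (u : ℝ)
  else (1 - (1 - α) * (d : ℝ) / (u : ℝ)) / ((u : ℝ) - (d : ℝ))

section Weights

variable {u d : ℕ} {α : ℝ} {h : Fin u → Label}

theorem sum_ite_eq_lneg_of_mem_Hfin (hh : h ∈ Hfin u d) (a b : ℝ) :
    ∑ i, (if h i = lneg then a else b) = d * a + (u - d) * b := by
  have hd : #{i | h i = lneg} = d := mem_Hfin.1 hh
  have hcard := card_filter_add_card_filter_not (s := univ) fun i => h i = lneg
  rw [card_univ, Fintype.card_fin, hd] at hcard
  have hu : (u : ℝ) = d + #{i | ¬h i = lneg} := by exact_mod_cast hcard.symm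
  rw [sum_ite, sum_const, sum_const, nsmul_eq_mul, nsmul_eq_mul, hu, hd]
  ring

theorem dhWeight_nonneg (hdu : d < u) (hα0 : 0 ≤ α) (hα1 : α ≤ 1) (i : Fin u) :
    0 ≤ dhWeight u d α h i := by
  have hu : (0 : ℝ) < u := by exact_mod_cast (Nat.zero_le d).trans_lt hdu
  have hdu' : (d : ℝ) < u := by exact_mod_cast hdu
  unfold dhWeight
  split_ifs
  · exact div_nonneg (by linarith) hu.le
  · refine div_nonneg ?_ (by linarith)
    rw [sub_nonneg, div_le_one hu]
    nlinarith

theorem sum_dhWeight (hdu : d < u) (hh : h ∈ Hfin u d) : ∑ i, dhWeight u d α h i = 1 := by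
  have hdu' : (d : ℝ) < u := by exact_mod_cast hdu
  have hu : (u : ℝ) ≠ 0 := by linarith [(Nat.cast_nonneg d : (0 : ℝ) ≤ d)]
  have hud : (u : ℝ) - d ≠ 0 := by linarith
  simp only [dhWeight, sum_ite_eq_lneg_of_mem_Hfin hh]
  field_simp
  ring

theorem card_mul_sum_dhWeight_sq (hdu : d < u) (hh : h ∈ Hfin u d) :
    u * ∑ i, dhWeight u d α h i ^ 2 = 1 + d * α ^ 2 / (u - d) := by
  have hdu' : (d : ℝ) < u := by exact_mod_cast hdu
  have hu : (u : ℝ) ≠ 0 := by linarith [(Nat.cast_nonneg d : (0 : ℝ) ≤ d)]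
  have hud : (u : ℝ) - d ≠ 0 := by linarith
  simp only [dhWeight, apply_ite (· ^ 2), sum_ite_eq_lneg_of_mem_Hfin hh]
  field_simp
  ring

end Weights

theorem Dh_singleton (u d : ℕ) (α : ℝ) (h : Fin u → Label) (i : Fin u) (l : Label) :
    Dh u d α h {(i, l)} = if l = lpos then ENNReal.ofReal (dhWeight u d α h i) else 0 := by
  rw [Dh, Measure.sum_apply _ (measurableSet_singleton _), tsum_fintype]
  simp only [Measure.smul_apply, Measure.dirac_apply, smul_eq_mul, Set.indicator_apply,
    Set.mem_singleton_iff, Prod.mk.injEq, Pi.one_apply, mul_ite, mul_one, mul_zero]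
  rcases Label.eq_lneg_or_eq_lpos l with rfl | rfl
  · simp [lpos_ne_lneg, lpos_ne_lneg.symm]
  · simp [sum_ite_eq', dhWeight]

instance (u d : ℕ) (α : ℝ) (h : Fin u → Label) : IsFiniteMeasure (Dh u d α h) :=
  ⟨by rw [Dh, Measure.sum_apply _ MeasurableSet.univ, tsum_fintype]
      exact ENNReal.sum_lt_top.2 fun i _ => by simp⟩

def labelPos {n u : ℕ} (s : Fin n → Fin u) : Fin n → Fin u × Label := fun j => (s j, lpos)

theorem labelPos_injective (n u : ℕ) : Function.Injective (labelPos (n := n) (u := u)) :=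
  fun _ _ e => funext fun j => congrArg Prod.fst (congrFun e j)

/-- `D_h` only charges positively labelled points, so `D_h^n` lives on the image of
`labelPos`. -/
theorem pi_Dh_apply {u d n : ℕ} {α : ℝ} {h : Fin u → Label}
    (hw : ∀ i, 0 ≤ dhWeight u d α h i) (E : Set (Fin n → Fin u × Label))
    [DecidablePred (· ∈ E)] :
    Measure.pi (fun _ => Dh u d α h) E = ENNReal.ofReal
      (∑ s : Fin n → Fin u, if labelPos s ∈ E then ∏ j, dhWeight u d α h (s j) else 0) := by
  have hE : ((univ.filter (· ∈ E) : Finset _) : Set _) = E := by ext; simp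
  conv_lhs => rw [← hE]
  rw [← sum_measure_singleton, sum_filter,
    ENNReal.ofReal_sum_of_nonneg fun s _ => by
      split_ifs
      exacts [prod_nonneg fun j _ => hw (s j), le_rfl]]
  symm
  refine Fintype.sum_of_injective labelPos (labelPos_injective n u) _ _ (fun S hS => ?_)
    (fun s => ?_)
  · have hneg : ∃ j, (S j).2 ≠ lpos := by
      by_contra! hpos
      exact hS ⟨fun j => (S j).1, funext fun j => Prod.ext rfl (hpos j).symm⟩
    obtain ⟨j, hj⟩ := hneg
    split_ifs
    · rw [Measure.pi_singleton]
      exact prod_eq_zero (mem_univ j) (by rw [← Prod.mk.eta (p := S j), Dh_singleton, if_neg hj])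
    · rfl
  · split_ifs
    · rw [Measure.pi_singleton, ENNReal.ofReal_prod_of_nonneg fun j _ => hw (s j)]
      simp [labelPos, Dh_singleton]
    · simp

theorem Nat.cast_le_div_two_iff {c d : ℕ} : (c : ℝ) ≤ d / 2 ↔ c ≤ d / 2 := by
  rw [le_div_iff₀ two_pos, Nat.le_div_iff_mul_le two_pos]
  exact_mod_cast Iff.rfl

theorem pi_Dh_overlap_le_half {u d n : ℕ} {α : ℝ} {h : Fin u → Label} (hdu : d < u)
    (hα0 : 0 ≤ α) (hα1 : α ≤ 1) (hh : h ∈ Hfin u d)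
    (A : (Fin n → Fin u × Label) → Fin u → Label) :
    Measure.pi (fun _ : Fin n => Dh u d α h)
        {S | (#{i | A S i = lneg ∧ h i = lneg} : ℝ) ≤ d / 2} =
      ENNReal.ofReal (1 - ∑ s : Fin n → Fin u,
        if d / 2 + 1 ≤ #(negSet (A (labelPos s)) ∩ negSet h) then ∏ j, dhWeight u d α h (s j)
        else 0) := by
  rw [pi_Dh_apply (fun i => dhWeight_nonneg hdu hα0 hα1 i)]
  congr 1
  have htotal : ∑ s : Fin n → Fin u, ∏ j, dhWeight u d α h (s j) = 1 := by
    rw [← Fintype.sum_pow, sum_dhWeight hdu hh, one_pow]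
  rw [eq_sub_iff_add_eq, ← sum_add_distrib]
  refine (sum_congr rfl fun s _ => ?_).trans htotal
  have hgood : labelPos s ∈ {S | (#{i | A S i = lneg ∧ h i = lneg} : ℝ) ≤ d / 2} ↔
      ¬ d / 2 + 1 ≤ #(negSet (A (labelPos s)) ∩ negSet h) := by
    simp only [Set.mem_ofPred_eq, filter_and, negSet, Nat.cast_le_div_two_iff]
    omega
  by_cases hbad : d / 2 + 1 ≤ #(negSet (A (labelPos s)) ∩ negSet h) <;> simp [hgood, hbad]

theorem ENNReal.ofReal_le_sum_ofReal_div_card {ι : Type*} {s : Finset ι} (hs : s.Nonempty)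
    {f : ι → ℝ} {c : ℝ} (hc : c * #s ≤ ∑ i ∈ s, f i) :
    ENNReal.ofReal c ≤ (∑ i ∈ s, ENNReal.ofReal (f i)) / #s := by
  have hs' : (0 : ℝ) < #s := by exact_mod_cast hs.card_pos
  calc ENNReal.ofReal c ≤ ENNReal.ofReal ((∑ i ∈ s, f i) / #s) :=
        ENNReal.ofReal_le_ofReal ((le_div_iff₀ hs').2 hc)
    _ = ENNReal.ofReal (∑ i ∈ s, f i) / #s := by
        rw [ENNReal.ofReal_div_of_pos hs', ENNReal.ofReal_natCast]
    _ ≤ (∑ i ∈ s, ENNReal.ofReal (f i)) / #s := by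
        gcongr
        exact le_sum_of_subadditive _ ENNReal.ofReal_zero.le
          (fun _ _ => ENNReal.ofReal_add_le) _ _

theorem natCast_mul_sq_le_of_le_sqrt {n : ℕ} {α X c : ℝ} (hα : 0 ≤ α) (hX : 0 ≤ X) (hc : 0 < c)
    (h : α ≤ √(X / (c * n))) : n * α ^ 2 ≤ X / c := by
  have hα2 := (Real.le_sqrt hα (by positivity)).1 h
  rcases n.eq_zero_or_pos with rfl | hn
  · simpa using div_nonneg hX hc.le
  · rwa [le_div_iff₀ (by positivity), mul_comm c, ← mul_assoc, mul_comm _ (n : ℝ),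
      ← le_div_iff₀ hc] at hα2

theorem two_pow_mul_pow_mul_pow_le {u d n : ℕ} {α : ℝ} (hd : 0 < d) (hdu : 100 * d ≤ u)
    (hα : n * α ^ 2 ≤ u * Real.log (u / d) / 100) :
    2 ^ d * ((d : ℝ) / (u - d)) ^ (d / 2 + 1) * (1 + d * α ^ 2 / (u - d)) ^ n ≤ 4 / 5 := by
  set k := d / 2 + 1
  set p : ℝ := d / (u - d) with hp
  set L := Real.log (u / d)
  have hd' : (0 : ℝ) < d := by exact_mod_cast hd
  have hdu' : 100 * (d : ℝ) ≤ u := by exact_mod_cast hdu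
  have hud : (0 : ℝ) < u - d := by linarith
  have hp0 : 0 ≤ p := by positivity
  have hL : 0 ≤ L := Real.log_nonneg (by rw [le_div_iff₀ hd']; linarith)
  have h2d : (2 : ℝ) ^ d ≤ 4 ^ k := by
    rw [show (4 : ℝ) = 2 ^ 2 by norm_num, ← pow_mul]
    exact pow_le_pow_right₀ (by norm_num) (by omega)
  have hF : (1 + d * α ^ 2 / (u - d)) ^ n ≤ Real.exp (L / 2) ^ k := by
    have hk : (d : ℝ) ≤ 2 * k := by exact_mod_cast (by omega : d ≤ 2 * k)
    have hx : n * (d * α ^ 2 / (u - d)) ≤ k * (L / 2) :=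
      calc n * (d * α ^ 2 / (u - d)) = p * (n * α ^ 2) := by ring
        _ ≤ p * (u * L / 100) := by gcongr
        _ = p * u * (L / 100) := by ring
        _ ≤ 2 * d * (L / 100) := by
          refine mul_le_mul_of_nonneg_right ?_ (by positivity)
          rw [hp, div_mul_eq_mul_div, div_le_iff₀ hud]
          nlinarith
        _ ≤ k * (L / 2) := by nlinarith
    calc (1 + d * α ^ 2 / (u - d)) ^ n ≤ Real.exp (d * α ^ 2 / (u - d)) ^ n := by
          gcongr
          linarith [Real.add_one_le_exp (d * α ^ 2 / (u - d))]
      _ ≤ Real.exp (L / 2) ^ k := by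
          rw [← Real.exp_nat_mul, ← Real.exp_nat_mul]
          exact Real.exp_le_exp.2 hx
  -- `exp (L / 2) = √(u / d)`, so the base below is `4 √(d u) / (u - d) ≤ 4 / 5`.
  have hbase : 4 * p * Real.exp (L / 2) ≤ 4 / 5 := by
    have hsq : Real.exp (L / 2) ^ 2 = u / d := by
      rw [← Real.exp_nat_mul, Nat.cast_ofNat, mul_div_cancel₀ _ two_ne_zero,
        Real.exp_log (div_pos (by linarith) hd')]
    refine (pow_le_pow_iff_left₀ (by positivity) (by norm_num) two_ne_zero).1 ?_
    rw [mul_pow, hsq, mul_pow, hp]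
    field_simp
    nlinarith
  calc 2 ^ d * p ^ k * (1 + d * α ^ 2 / (u - d)) ^ n
      ≤ 4 ^ k * p ^ k * Real.exp (L / 2) ^ k := by gcongr
    _ = (4 * p * Real.exp (L / 2)) ^ k := by ring
    _ ≤ (4 / 5) ^ k := by gcongr
    _ ≤ 4 / 5 := pow_le_of_le_one (by norm_num) (by norm_num) (by omega)

theorem sq_sum_prob_large_overlap_le {u d n : ℕ} {α : ℝ} (hd : 0 < d) (hdu : 100 * d ≤ u)
    (hα : n * α ^ 2 ≤ u * Real.log (u / d) / 100)
    (A : (Fin n → Fin u) → Fin u → Label) (hA : ∀ s, A s ∈ Hfin u d) :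
    (∑ h ∈ Hfin u d, ∑ s, if d / 2 + 1 ≤ #(negSet (A s) ∩ negSet h)
      then ∏ j, dhWeight u d α h (s j) else 0) ^ 2 ≤ 4 / 5 * (#(Hfin u d) : ℝ) ^ 2 := by
  set k := d / 2 + 1
  set N := d.choose k * u.choose (d - k)
  have hdu' : d < u := by omega
  have hud : (0 : ℝ) < u - d := by
    have : (d : ℝ) < u := by exact_mod_cast hdu'
    linarith
  have hN : (N : ℝ) ≤ 2 ^ d * (d / (u - d)) ^ k * #(Hfin u d) := by
    have hchoose : (u.choose (d - k) : ℝ) ≤ u.choose d * d ^ k / (u - d) ^ k := by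
      have h := Nat.cast_le (α := ℝ).2 (Nat.choose_sub_mul_pow_le (u := u) (by omega : k ≤ d))
      push_cast [Nat.cast_sub hdu'.le] at h
      rwa [le_div_iff₀ (by positivity)]
    calc (N : ℝ) = d.choose k * u.choose (d - k) := by push_cast [N]; rfl
      _ ≤ 2 ^ d * (u.choose d * d ^ k / (u - d) ^ k) := by
        gcongr
        exact_mod_cast Nat.choose_le_two_pow d k
      _ = 2 ^ d * (d / (u - d)) ^ k * #(Hfin u d) := by rw [card_Hfin, div_pow]; ring
  calc (∑ h ∈ Hfin u d, ∑ s, if k ≤ #(negSet (A s) ∩ negSet h)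
          then ∏ j, dhWeight u d α h (s j) else 0) ^ 2
      ≤ N * ∑ h ∈ Hfin u d, (Fintype.card (Fin u) * ∑ i, dhWeight u d α h i ^ 2) ^ n :=
        sq_sum_sum_ite_prod_le _ _ _ N fun s =>
          card_Hfin_filter_le_choose_mul_choose _ (mem_Hfin.1 (hA s)) k
    _ = N * (#(Hfin u d) * (1 + d * α ^ 2 / (u - d)) ^ n) := by
        rw [Fintype.card_fin, sum_congr rfl fun h hh => by rw [card_mul_sum_dhWeight_sq hdu' hh],
          sum_const, nsmul_eq_mul]
    _ ≤ 2 ^ d * (d / (u - d)) ^ k * #(Hfin u d) *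
          (#(Hfin u d) * (1 + d * α ^ 2 / (u - d)) ^ n) := by gcongr
    _ = 2 ^ d * (d / (u - d)) ^ k * (1 + d * α ^ 2 / (u - d)) ^ n * #(Hfin u d) ^ 2 := by ring
    _ ≤ 4 / 5 * #(Hfin u d) ^ 2 := by
        gcongr
        exact two_pow_mul_pow_mul_pow_le hd hdu hα

/-- any proper learner fails with probability at least 1/16 over a uniformly
random `h` from `H` and a sample from `D_h^n` (Lemma 5).  The probability over the random
pair `(h, S)` is written as the average over `h ∈ H` of the sample-probabilities. -/
theorem proper_learner_often_fails :
    ∃ C' : ℝ, 2 < C' ∧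
      ∀ (u d n : ℕ) (α : ℝ), 1 ≤ d → d < u → 0 < α → α < 1 →
        α ≤ min (Real.sqrt ((u : ℝ) * Real.log ((u : ℝ) / (d : ℝ)) / (C' * (n : ℝ)))) (1 / C') →
        (d : ℝ) * C' ≤ (u : ℝ) → (u : ℝ) ≤ (n : ℝ) / C' →
        ∀ A : (Fin n → Fin u × Label) → (Fin u → Label), (∀ S, A S ∈ Hfin u d) →
          ENNReal.ofReal (1 / 16) ≤
            (∑ h ∈ Hfin u d,
              Measure.pi (fun _ : Fin n => Dh u d α h)
                {S | ((Finset.univ.filter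
                    fun i => A S i = lneg ∧ h i = lneg).card : ℝ) ≤ (d : ℝ) / 2}) /
              ((Hfin u d).card : ℝ≥0∞) := by
  refine ⟨100, by norm_num, fun u d n α hd hdu hα0 hα1 hαmin hdC _ A hA => ?_⟩
  have h100 : 100 * d ≤ u := by exact_mod_cast (by push_cast; linarith : ((100 * d : ℕ) : ℝ) ≤ u)
  have hL : 0 ≤ u * Real.log (u / d) := mul_nonneg (Nat.cast_nonneg u)
    (Real.log_nonneg ((one_le_div (by positivity)).2 (by exact_mod_cast hdu.le)))
  have hα := natCast_mul_sq_le_of_le_sqrt hα0.le hL (by norm_num) (hαmin.trans (min_le_left _ _))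
  have hlarge := le_of_pow_le_pow_left₀ two_ne_zero (by positivity)
    ((sq_sum_prob_large_overlap_le (by omega) h100 hα (fun s => A (labelPos s)) fun _ => hA _).trans
      (by nlinarith : 4 / 5 * (#(Hfin u d) : ℝ) ^ 2 ≤ (15 / 16 * #(Hfin u d)) ^ 2))
  rw [sum_congr rfl fun h hh => pi_Dh_overlap_le_half hdu hα0.le hα1.le hh A]
  refine ENNReal.ofReal_le_sum_ofReal_div_card
    (card_pos.1 (by rw [card_Hfin]; exact Nat.choose_pos hdu.le)) ?_
  rw [sum_sub_distrib, sum_const, nsmul_eq_mul, mul_one]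
  linarith
end

section
/- Let X_1, ..., X_n be independent {0,1}-valued random variables, each with Pr[X_i = 1] = p, where 0 < p ≤ 1/2. Then for every real δ with sqrt(3/(n·p)) < δ < 1/2, Pr[ Σ_{i=1}^n X_i ≤ (1-δ)·n·p ] ≥ exp(-9·n·p·δ²). -/
open MeasureTheory ProbabilityTheory

/-!
The event contains every outcome with exactly `j` successes for the integers `j` in the window
`(1 - 2δ)np ≤ j ≤ (1 - δ)np`, of which there are at least `δnp - 1 ≥ √(np)`. Stirling bounds
on the factorials give `P(S = j) ≥ (2/e²)/√(np) · exp(-(j - np)²/(np(1-p)))`, the Gaussian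
factor coming from `log x ≥ 1 - 1/x`, and on the window this is at least
`(2/e²)/√(np) · exp(-8npδ²)`. The window therefore has mass at least `(2/e²) exp(-8npδ²)`,
which exceeds `exp(-9npδ²)` as `npδ² > 3`.
-/

open Finset Real
open scoped Nat

theorem factorial_le_exp_one_mul_sqrt_mul_div_exp_pow {k : ℕ} (hk : k ≠ 0) :
    (k ! : ℝ) ≤ exp 1 * (√k * (k / exp 1) ^ k) := by
  have hseq : Stirling.stirlingSeq k ≤ exp 1 / √2 := by
    obtain ⟨m, rfl⟩ := Nat.exists_eq_succ_of_ne_zero hk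
    exact Stirling.stirlingSeq_one ▸ Stirling.stirlingSeq'_antitone (Nat.zero_le m)
  have hpos : 0 < √(2 * k) * (k / exp 1) ^ k := by
    have : (0 : ℝ) < k := by positivity
    positivity
  rw [Stirling.stirlingSeq, div_le_iff₀ hpos, sqrt_mul zero_le_two] at hseq
  calc (k ! : ℝ) ≤ exp 1 / √2 * (√2 * √k * (k / exp 1) ^ k) := hseq
    _ = exp 1 * (√k * (k / exp 1) ^ k) := by field_simp

theorem two_mul_sqrt_mul_div_exp_pow_le_factorial (k : ℕ) :
    2 * (√k * (k / exp 1) ^ k) ≤ k ! := by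
  have h2 : 2 ≤ √(2 * π) := le_sqrt_of_sq_le (by nlinarith [pi_gt_three])
  calc 2 * (√k * (k / exp 1) ^ k) ≤ √(2 * π) * (√k * (k / exp 1) ^ k) := by gcongr
    _ = √(2 * π * k) * (k / exp 1) ^ k := by rw [sqrt_mul (by positivity) (k : ℝ)]; ring
    _ ≤ k ! := Stirling.le_factorial_stirling k

theorem le_choose_stirling {n j k : ℕ} (hjk : j + k = n) (hj : j ≠ 0) (hk : k ≠ 0) :
    2 / exp 1 ^ 2 * (√n / (√j * √k)) * ((n : ℝ) ^ n / ((j : ℝ) ^ j * (k : ℝ) ^ k)) ≤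
      n.choose j := by
  subst hjk
  have hfact : (j ! : ℝ) * k ! ≤
      exp 1 * (√j * (j / exp 1) ^ j) * (exp 1 * (√k * (k / exp 1) ^ k)) :=
    mul_le_mul (factorial_le_exp_one_mul_sqrt_mul_div_exp_pow hj)
      (factorial_le_exp_one_mul_sqrt_mul_div_exp_pow hk) (by positivity) (by positivity)
  calc 2 / exp 1 ^ 2 * (√(j + k : ℕ) / (√j * √k)) *
        (((j + k : ℕ) : ℝ) ^ (j + k) / ((j : ℝ) ^ j * (k : ℝ) ^ k))
      = 2 * (√(j + k : ℕ) * ((j + k : ℕ) / exp 1) ^ (j + k)) /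
          (exp 1 * (√j * (j / exp 1) ^ j) * (exp 1 * (√k * (k / exp 1) ^ k))) := by
        rw [div_pow, div_pow, div_pow, pow_add (exp 1)]
        field_simp
    _ ≤ (j + k)! / (j ! * k !) :=
        div_le_div₀ (by positivity) (two_mul_sqrt_mul_div_exp_pow_le_factorial _)
          (by positivity) hfact
    _ = (j + k).choose j := (Nat.cast_add_choose ℝ).symm

theorem exp_sub_sq_div_le_div_pow {x : ℝ} (hx : 0 < x) (j : ℕ) :
    exp (j - j ^ 2 / x) ≤ (x / j) ^ j := by
  rcases Nat.eq_zero_or_pos j with rfl | hj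
  · simp
  have hj' : (0 : ℝ) < j := by exact_mod_cast hj
  rw [← exp_log (pow_pos (div_pos hx hj') j), log_pow, exp_le_exp]
  have hlog := one_sub_inv_le_log_of_pos (div_pos hx hj')
  calc (j : ℝ) - j ^ 2 / x = j * (1 - (x / j)⁻¹) := by field_simp
    _ ≤ j * log (x / j) := by gcongr

theorem le_choose_mul_pow_mul_pow {n j k : ℕ} (hjk : j + k = n) (hj : j ≠ 0) (hk : k ≠ 0)
    {p : ℝ} (hp0 : 0 < p) (hp1 : p < 1) :
    2 / exp 1 ^ 2 * (√n / (√j * √k)) * exp (-((j - n * p) ^ 2 / (n * p * (1 - p)))) ≤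
      n.choose j * p ^ j * (1 - p) ^ k := by
  have hq : 0 < 1 - p := sub_pos.2 hp1
  have hj' : (0 : ℝ) < j := by positivity
  have hk' : (0 : ℝ) < k := by positivity
  have hn : (n : ℝ) = j + k := by rw [← hjk]; push_cast; ring
  have hn' : (0 : ℝ) < n := by rw [hn]; positivity
  have hexp : -((j - n * p) ^ 2 / (n * p * (1 - p))) =
      (j - j ^ 2 / (n * p)) + (k - k ^ 2 / (n * (1 - p))) := by
    rw [hn]; field_simp; ring
  calc 2 / exp 1 ^ 2 * (√n / (√j * √k)) * exp (-((j - n * p) ^ 2 / (n * p * (1 - p))))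
      ≤ 2 / exp 1 ^ 2 * (√n / (√j * √k)) * ((n * p / j) ^ j * (n * (1 - p) / k) ^ k) := by
        rw [hexp, exp_add]
        gcongr <;> exact exp_sub_sq_div_le_div_pow (by positivity) _
    _ = 2 / exp 1 ^ 2 * (√n / (√j * √k)) * ((n : ℝ) ^ n / ((j : ℝ) ^ j * (k : ℝ) ^ k)) *
          (p ^ j * (1 - p) ^ k) := by
        rw [div_pow, div_pow, mul_pow, mul_pow, ← hjk, pow_add ((j + k : ℕ) : ℝ)]
        field_simp
    _ ≤ n.choose j * (p ^ j * (1 - p) ^ k) := by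
        gcongr; exact le_choose_stirling hjk hj hk
    _ = n.choose j * p ^ j * (1 - p) ^ k := by ring

theorem le_choose_mul_pow_mul_pow_of_mem_lower_window {n j : ℕ} {p δ : ℝ} (hn : n ≠ 0)
    (hp0 : 0 < p) (hp2 : p ≤ 1 / 2) (hδ2 : δ < 1 / 2)
    (hlow : (1 - 2 * δ) * n * p ≤ j) (hhigh : (j : ℝ) ≤ (1 - δ) * n * p) :
    2 / exp 1 ^ 2 / √(n * p) * exp (-(8 * n * p * δ ^ 2)) ≤
      n.choose j * p ^ j * (1 - p) ^ (n - j) := by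
  have hn' : (0 : ℝ) < n := by positivity
  have hnp : 0 < (n : ℝ) * p := by positivity
  have hδ0 : 0 ≤ δ := by nlinarith
  have hj : j ≠ 0 := by
    have : 0 < (1 - 2 * δ) * n * p := mul_pos (mul_pos (by linarith) hn') hp0
    exact_mod_cast (this.trans_le hlow).ne'
  have hjn : j < n := by
    have : (j : ℝ) < n := by nlinarith
    exact_mod_cast this
  obtain ⟨k, rfl⟩ := Nat.exists_eq_add_of_lt hjn
  rw [show j + k + 1 - j = k + 1 by omega]
  set n := j + k + 1 with hn_def
  have hsqrt : 1 / √(n * p) ≤ √n / (√j * √(k + 1 : ℕ)) := by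
    have hjle : √j ≤ √(n * p) := sqrt_le_sqrt (by nlinarith)
    have hkle : √(k + 1 : ℕ) ≤ √n := sqrt_le_sqrt (by simp [hn_def])
    calc 1 / √(n * p) = √n / (√(n * p) * √n) := by field_simp
      _ ≤ √n / (√j * √(k + 1 : ℕ)) := by gcongr
  have hchi : (j - n * p) ^ 2 / (n * p * (1 - p)) ≤ 8 * n * p * δ ^ 2 := by
    rw [div_le_iff₀ (by nlinarith)]
    have h1 : δ * (n * p) ≤ n * p - j := by nlinarith
    have h2 : (j - n * p) ^ 2 ≤ 4 * δ ^ 2 * (n * p) ^ 2 := by nlinarith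
    have h3 : 0 ≤ δ ^ 2 * (n * p) ^ 2 * (1 - 2 * p) := by
      have : (0 : ℝ) ≤ 1 - 2 * p := by linarith
      positivity
    nlinarith
  calc 2 / exp 1 ^ 2 / √(n * p) * exp (-(8 * n * p * δ ^ 2))
      = 2 / exp 1 ^ 2 * (1 / √(n * p)) * exp (-(8 * n * p * δ ^ 2)) := by ring
    _ ≤ 2 / exp 1 ^ 2 * (√n / (√j * √(k + 1 : ℕ))) *
          exp (-((j - n * p) ^ 2 / (n * p * (1 - p)))) := by gcongr
    _ ≤ n.choose j * p ^ j * (1 - p) ^ (k + 1) :=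
        le_choose_mul_pow_mul_pow rfl hj k.succ_ne_zero hp0 (by linarith)

theorem sub_sub_one_le_card_Icc_ceil_floor {a b : ℝ} (ha : 0 ≤ a) :
    b - a - 1 ≤ #(Icc ⌈a⌉₊ ⌊b⌋₊) := by
  have hceil : (⌈a⌉₊ : ℝ) < a + 1 := Nat.ceil_lt_add_one ha
  have hfloor : b < ⌊b⌋₊ + 1 := Nat.lt_floor_add_one b
  rw [Nat.card_Icc]
  rcases le_or_gt ⌈a⌉₊ (⌊b⌋₊ + 1) with h | h
  · rw [Nat.cast_sub h]
    push_cast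
    linarith
  · rw [Nat.sub_eq_zero_of_le h.le]
    have : (⌊b⌋₊ : ℝ) + 1 < ⌈a⌉₊ := by exact_mod_cast h
    push_cast
    linarith

theorem exp_le_sum_binomial_lower_window {n : ℕ} {p δ : ℝ} (hp0 : 0 < p) (hp2 : p ≤ 1 / 2)
    (hδ0 : 0 < δ) (hδ2 : δ < 1 / 2) (h3 : 3 < n * p * δ ^ 2) :
    exp (-9 * n * p * δ ^ 2) ≤ ∑ j ∈ Icc ⌈(1 - 2 * δ) * n * p⌉₊ ⌊(1 - δ) * n * p⌋₊,
      (n.choose j : ℝ) * p ^ j * (1 - p) ^ (n - j) := by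
  have hn : n ≠ 0 := by
    rintro rfl
    norm_num at h3
  have hnp : 0 < (n : ℝ) * p := by positivity
  set b := 2 / exp 1 ^ 2 / √(n * p) * exp (-(8 * n * p * δ ^ 2)) with hb
  have hterm : ∀ j ∈ Icc ⌈(1 - 2 * δ) * n * p⌉₊ ⌊(1 - δ) * n * p⌋₊,
      b ≤ n.choose j * p ^ j * (1 - p) ^ (n - j) := by
    intro j hj
    rw [mem_Icc] at hj
    exact le_choose_mul_pow_mul_pow_of_mem_lower_window hn hp0 hp2 hδ2 (Nat.ceil_le.1 hj.1)
      ((Nat.cast_le.2 hj.2).trans (Nat.floor_le (by nlinarith)))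
  have hcard : δ * n * p - 1 ≤ #(Icc ⌈(1 - 2 * δ) * n * p⌉₊ ⌊(1 - δ) * n * p⌋₊) := by
    have hlow : 0 ≤ (1 - 2 * δ) * n * p := by
      have : 0 < 1 - 2 * δ := by linarith
      positivity
    have := sub_sub_one_le_card_Icc_ceil_floor (b := (1 - δ) * n * p) hlow
    linarith
  have hfactor : exp (-(n * p * δ ^ 2)) ≤ (δ * n * p - 1) * (2 / exp 1 ^ 2 / √(n * p)) := by
    have hs : √(n * p) ^ 2 = n * p := sq_sqrt hnp.le
    have hs0 : 0 < √(n * p) := sqrt_pos.2 hnp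
    have hδsq : δ ^ 2 < 1 / 4 := by nlinarith
    have hnp12 : 12 < n * p := by nlinarith [mul_lt_mul_of_pos_left hδsq hnp]
    have hs3 : 3 < √(n * p) := by nlinarith
    have hδs2 : (δ * √(n * p)) ^ 2 = n * p * δ ^ 2 := by rw [mul_pow, hs]; ring
    have hδs : 1.7 ≤ δ * √(n * p) := by nlinarith [mul_pos hδ0 hs0]
    have hwidth : √(n * p) + 1 ≤ δ * n * p := by nlinarith
    have he : exp 1 ^ 2 ≤ 8 := by nlinarith [exp_one_lt_d9, exp_pos 1]
    have he3 : 8 ≤ exp 3 := by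
      calc (8 : ℝ) = 2 ^ 3 := by norm_num
        _ ≤ exp 1 ^ 3 := by gcongr; linarith [exp_one_gt_d9]
        _ = exp 3 := by rw [← exp_nat_mul]; norm_num
    calc exp (-(n * p * δ ^ 2)) ≤ exp (-3) := exp_le_exp.2 (by linarith)
      _ ≤ 2 / exp 1 ^ 2 := by
        rw [exp_neg, inv_le_iff_one_le_mul₀ (exp_pos 3)]
        rw [div_mul_eq_mul_div, one_le_div (by positivity)]
        linarith
      _ = √(n * p) * (2 / exp 1 ^ 2 / √(n * p)) := by field_simp
      _ ≤ (δ * n * p - 1) * (2 / exp 1 ^ 2 / √(n * p)) := by gcongr; linarith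
  calc exp (-9 * n * p * δ ^ 2) = exp (-(n * p * δ ^ 2)) * exp (-(8 * n * p * δ ^ 2)) := by
        rw [← exp_add]; ring_nf
    _ ≤ (δ * n * p - 1) * b := by
        rw [hb, ← mul_assoc]; gcongr
    _ ≤ #(Icc ⌈(1 - 2 * δ) * n * p⌉₊ ⌊(1 - δ) * n * p⌋₊) * b := by gcongr
    _ ≤ _ := by rw [← nsmul_eq_mul]; exact card_nsmul_le_sum _ _ _ hterm

section SuccessSet

variable {Ω ι : Type*} [Fintype ι]

noncomputable def successSet (X : ι → Ω → ℝ) (ω : Ω) : Finset ι := {i | X i ω = 1}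

variable {X : ι → Ω → ℝ}

theorem sum_eq_card_successSet {ω : Ω} (h01 : ∀ i, X i ω = 0 ∨ X i ω = 1) :
    ∑ i, X i ω = #(successSet X ω) := by
  rw [successSet, ← sum_boole]
  refine sum_congr rfl fun i _ => ?_
  rcases h01 i with h | h <;> simp [h]

theorem preimage_card_successSet_singleton (k : ℕ) :
    (fun ω => #(successSet X ω)) ⁻¹' {k} =
      successSet X ⁻¹' ↑(powersetCard k (univ : Finset ι)) := by
  ext ω
  simp [mem_powersetCard]

variable [DecidableEq ι]

theorem preimage_successSet_singleton (s : Finset ι) :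
    successSet X ⁻¹' {s} =
      ⋂ i ∈ (univ : Finset ι), X i ⁻¹' (if i ∈ s then {1} else {1}ᶜ) := by
  ext ω
  simp only [Set.mem_preimage, Set.mem_singleton_iff, Set.mem_iInter, mem_univ, forall_const,
    Finset.ext_iff, successSet, mem_filter, true_and]
  refine forall_congr' fun i => ?_
  split_ifs with hi <;> simp [hi]

variable [MeasurableSpace Ω]

theorem measurableSet_preimage_successSet (hmeas : ∀ i, Measurable (X i))
    (S : Finset (Finset ι)) : MeasurableSet (successSet X ⁻¹' S) := by
  rw [← set_biUnion_preimage_singleton]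
  refine measurableSet_biUnion _ fun s _ => ?_
  rw [preimage_successSet_singleton]
  refine measurableSet_biInter _ fun i _ => hmeas i ?_
  split_ifs
  exacts [measurableSet_singleton 1, (measurableSet_singleton 1).compl]

variable {μ : Measure Ω} [IsProbabilityMeasure μ] {p : ℝ}

theorem measure_preimage_successSet_singleton (hmeas : ∀ i, Measurable (X i))
    (hindep : iIndepFun X μ) (hp : ∀ i, μ {ω | X i ω = 1} = ENNReal.ofReal p)
    (hp0 : 0 ≤ p) (hp1 : p ≤ 1) (s : Finset ι) :
    μ (successSet X ⁻¹' {s}) = ENNReal.ofReal (p ^ #s * (1 - p) ^ (Fintype.card ι - #s)) := by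
  have hsucc : ∀ i, μ (X i ⁻¹' {1}) = ENNReal.ofReal p := hp
  have hfail : ∀ i, μ (X i ⁻¹' {1}ᶜ) = ENNReal.ofReal (1 - p) := fun i => by
    rw [Set.preimage_compl, prob_compl_eq_one_sub (hmeas i (measurableSet_singleton 1)),
      hsucc, ENNReal.ofReal_sub 1 hp0, ENNReal.ofReal_one]
  rw [preimage_successSet_singleton, hindep.measure_inter_preimage_eq_mul]
  · simp only [apply_ite, hsucc, hfail, prod_ite, prod_const, filter_univ_mem]
    rw [← card_compl, ← filter_univ_mem sᶜ]
    simp only [mem_compl]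
    rw [ENNReal.ofReal_mul (by positivity), ENNReal.ofReal_pow hp0,
      ENNReal.ofReal_pow (sub_nonneg.2 hp1)]
  · intro i _
    split_ifs
    exacts [measurableSet_singleton 1, (measurableSet_singleton 1).compl]

theorem measure_preimage_card_successSet_singleton (hmeas : ∀ i, Measurable (X i))
    (hindep : iIndepFun X μ) (hp : ∀ i, μ {ω | X i ω = 1} = ENNReal.ofReal p)
    (hp0 : 0 ≤ p) (hp1 : p ≤ 1) (k : ℕ) :
    μ ((fun ω => #(successSet X ω)) ⁻¹' {k}) = ENNReal.ofReal
      ((Fintype.card ι).choose k * p ^ k * (1 - p) ^ (Fintype.card ι - k)) := by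
  rw [preimage_card_successSet_singleton, ← sum_measure_preimage_singleton _
    fun s _ => by simpa using measurableSet_preimage_successSet hmeas {s}]
  rw [sum_congr rfl fun s hs => by
    rw [measure_preimage_successSet_singleton hmeas hindep hp hp0 hp1, (mem_powersetCard.1 hs).2]]
  rw [sum_const, card_powersetCard, card_univ, nsmul_eq_mul, mul_assoc,
    ENNReal.ofReal_mul (Nat.cast_nonneg _), ENNReal.ofReal_natCast]

theorem ofReal_sum_binomial_le_measure_sum_le (hmeas : ∀ i, Measurable (X i))
    (h01 : ∀ i ω, X i ω = 0 ∨ X i ω = 1) (hindep : iIndepFun X μ)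
    (hp : ∀ i, μ {ω | X i ω = 1} = ENNReal.ofReal p) (hp0 : 0 ≤ p) (hp1 : p ≤ 1)
    {J : Finset ℕ} {t : ℝ} (hJ : ∀ j ∈ J, (j : ℝ) ≤ t) :
    ENNReal.ofReal (∑ j ∈ J,
        ((Fintype.card ι).choose j * p ^ j * (1 - p) ^ (Fintype.card ι - j) : ℝ)) ≤
      μ {ω | ∑ i, X i ω ≤ t} := by
  have hsub : (fun ω => #(successSet X ω)) ⁻¹' J ⊆ {ω | ∑ i, X i ω ≤ t} := fun ω hω => by
    simpa [sum_eq_card_successSet (h01 · ω)] using hJ _ hω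
  have hq : 0 ≤ 1 - p := sub_nonneg.2 hp1
  calc _ = ∑ j ∈ J, μ ((fun ω => #(successSet X ω)) ⁻¹' {j}) := by
        rw [ENNReal.ofReal_sum_of_nonneg fun j _ => by positivity]
        exact sum_congr rfl fun j _ => (measure_preimage_card_successSet_singleton hmeas hindep hp hp0 hp1 j).symm
    _ = μ ((fun ω => #(successSet X ω)) ⁻¹' J) :=
        sum_measure_preimage_singleton _ fun j _ => by
          rw [preimage_card_successSet_singleton]
          exact measurableSet_preimage_successSet hmeas _
    _ ≤ μ {ω | ∑ i, X i ω ≤ t} := measure_mono hsub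

end SuccessSet

/-- reverse Chernoff bound for i.i.d. Bernoulli(p) random variables
(Lemma of Klein and Young). -/
theorem reverse_chernoff {Ω : Type*} [MeasurableSpace Ω] (μ : Measure Ω)
    [IsProbabilityMeasure μ] (n : ℕ) (X : Fin n → Ω → ℝ) (p : ℝ)
    (hmeas : ∀ i, Measurable (X i))
    (h01 : ∀ i ω, X i ω = 0 ∨ X i ω = 1)
    (hindep : iIndepFun X μ)
    (hp : ∀ i, μ {ω | X i ω = 1} = ENNReal.ofReal p)
    (hp0 : 0 < p) (hp2 : p ≤ 1 / 2)
    (δ : ℝ) (hδ1 : Real.sqrt (3 / ((n : ℝ) * p)) < δ) (hδ2 : δ < 1 / 2) :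
    ENNReal.ofReal (Real.exp (-9 * (n : ℝ) * p * δ ^ 2)) ≤
      μ {ω | (∑ i, X i ω) ≤ (1 - δ) * (n : ℝ) * p} := by
  rcases n.eq_zero_or_pos with rfl | hn
  · simp
  have hδ0 : 0 < δ := (sqrt_nonneg _).trans_lt hδ1
  have h3 : 3 < n * p * δ ^ 2 := by
    have := (sqrt_lt' hδ0).1 hδ1
    rw [div_lt_iff₀ (by positivity)] at this
    linarith
  calc ENNReal.ofReal (exp (-9 * n * p * δ ^ 2))
      ≤ ENNReal.ofReal (∑ j ∈ Icc ⌈(1 - 2 * δ) * n * p⌉₊ ⌊(1 - δ) * n * p⌋₊,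
          (n.choose j : ℝ) * p ^ j * (1 - p) ^ (n - j)) :=
        ENNReal.ofReal_le_ofReal (exp_le_sum_binomial_lower_window hp0 hp2 hδ0 hδ2 h3)
    _ ≤ μ {ω | ∑ i, X i ω ≤ (1 - δ) * n * p} := by
        simpa using ofReal_sum_binomial_le_measure_sum_le hmeas h01 hindep hp hp0.le (by linarith)
          fun j hj => (Nat.cast_le.2 (mem_Icc.1 hj).2).trans
            (Nat.floor_le (mul_nonneg (mul_nonneg (by linarith) n.cast_nonneg) hp0.le))
end

section
/- Let Y_1, ..., Y_m be {0,1}-valued random variables, each with expectation E[Y_i] = q, that are pairwise negatively correlated, i.e. E[Y_i Y_j] ≤ q² for all i ≠ j. If m·q ≥ 1, then Pr[ Σ_{i=1}^m Y_i > m·q/2 ] ≥ 1/8. -/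
/-!
Let `S = ∑ i, Y i`. Then `E S = m q`, and since `Y i ^ 2 = Y i` while the off-diagonal terms
`E (Y i * Y j)` are at most `q ^ 2`, `E S² ≤ m q + (m q)² ≤ 2 (m q)²` once `m q ≥ 1`.
The Paley–Zygmund inequality at `θ = 1/2`, proved by Cauchy–Schwarz from
`S ≤ θ E S + S · 1_{S > θ E S}`, gives `P(S > m q / 2) ≥ (1/4) (E S)² / E S² ≥ 1/8`.
-/

open MeasureTheory

theorem sq_integral_mul_le_integral_sq_mul_integral_sq {α : Type*} [MeasurableSpace α]
    {μ : Measure α} {f g : α → ℝ} (hf : MemLp f 2 μ) (hg : MemLp g 2 μ) :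
    (∫ a, f a * g a ∂μ) ^ 2 ≤ (∫ a, f a ^ 2 ∂μ) * ∫ a, g a ^ 2 ∂μ := by
  have hquadratic : ∀ t : ℝ, ∫ a, (f a - t * g a) ^ 2 ∂μ =
      (∫ a, g a ^ 2 ∂μ) * (t * t) + (-2 * ∫ a, f a * g a ∂μ) * t + ∫ a, f a ^ 2 ∂μ := by
    intro t
    have hfg : Integrable (fun a => f a * g a) μ := hf.integrable_mul hg
    calc ∫ a, (f a - t * g a) ^ 2 ∂μ
        = ∫ a, (f a ^ 2 - (2 * t) * (f a * g a)) + t ^ 2 * g a ^ 2 ∂μ := by congr 1; ext; ring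
      _ = _ := by
        rw [integral_add, integral_sub, integral_const_mul, integral_const_mul]
        · ring
        exacts [hf.integrable_sq, hfg.const_mul _, hf.integrable_sq.sub (hfg.const_mul _),
          hg.integrable_sq.const_mul _]
  have hdiscrim := discrim_le_zero fun t => hquadratic t ▸ integral_nonneg fun a => sq_nonneg _
  rw [discrim] at hdiscrim
  linarith

theorem paley_zygmund {Ω : Type*} [MeasurableSpace Ω] {μ : Measure Ω} [IsProbabilityMeasure μ]
    {Z : Ω → ℝ} (hZm : Measurable Z) (hZ : MemLp Z 2 μ) (hZ0 : 0 ≤ Z) {θ : ℝ} (hθ0 : 0 ≤ θ)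
    (hθ1 : θ ≤ 1) :
    (1 - θ) ^ 2 * (∫ ω, Z ω ∂μ) ^ 2 ≤ (∫ ω, Z ω ^ 2 ∂μ) * μ.real {ω | θ * ∫ ω, Z ω ∂μ < Z ω} := by
  set A := {ω | θ * ∫ ω, Z ω ∂μ < Z ω}
  have hA : MeasurableSet A := measurableSet_lt measurable_const hZm
  have hmean0 : 0 ≤ θ * ∫ ω, Z ω ∂μ := mul_nonneg hθ0 (integral_nonneg hZ0)
  have h1A : MemLp (A.indicator (1 : Ω → ℝ)) 2 μ :=
    memLp_indicator_const 2 hA 1 (Or.inr (measure_ne_top μ A))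
  have hpointwise : ∀ ω, Z ω ≤ θ * ∫ ω, Z ω ∂μ + Z ω * A.indicator 1 ω := by
    intro ω
    by_cases hω : ω ∈ A
    · simp [Set.indicator_of_mem hω, hmean0]
    · simpa [Set.indicator_of_notMem hω] using not_lt.mp hω
  have hmean_le : (1 - θ) * ∫ ω, Z ω ∂μ ≤ ∫ ω, Z ω * A.indicator 1 ω ∂μ := by
    have hZ1A : Integrable (fun ω => Z ω * A.indicator 1 ω) μ := hZ.integrable_mul h1A
    have := calc ∫ ω, Z ω ∂μ
        ≤ ∫ ω, θ * (∫ ω, Z ω ∂μ) + Z ω * A.indicator 1 ω ∂μ :=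
          integral_mono (hZ.integrable one_le_two) ((integrable_const _).add hZ1A) hpointwise
      _ = θ * (∫ ω, Z ω ∂μ) + ∫ ω, Z ω * A.indicator 1 ω ∂μ := by
          rw [integral_add (integrable_const _) hZ1A, integral_const, probReal_univ, one_smul]
    linarith
  have hcs := sq_integral_mul_le_integral_sq_mul_integral_sq hZ h1A
  have hind_sq : ∀ ω, A.indicator (1 : Ω → ℝ) ω ^ 2 = A.indicator 1 ω := by
    intro ω; by_cases hω : ω ∈ A <;> simp [hω]
  simp only [hind_sq, integral_indicator_one hA] at hcs
  calc (1 - θ) ^ 2 * (∫ ω, Z ω ∂μ) ^ 2 = ((1 - θ) * ∫ ω, Z ω ∂μ) ^ 2 := by ring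
    _ ≤ (∫ ω, Z ω * A.indicator 1 ω ∂μ) ^ 2 :=
      pow_le_pow_left₀ (mul_nonneg (by linarith) (integral_nonneg hZ0)) hmean_le 2
    _ ≤ _ := hcs

section IndicatorSums

variable {Ω ι : Type*} [MeasurableSpace Ω] {μ : Measure Ω} [Fintype ι]

theorem memLp_of_forall_eq_zero_or_one [IsFiniteMeasure μ] {p : ENNReal} {Y : Ω → ℝ}
    (hY : Measurable Y) (h01 : ∀ ω, Y ω = 0 ∨ Y ω = 1) : MemLp Y p μ :=
  MemLp.of_bound hY.aestronglyMeasurable 1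
    (ae_of_all _ fun ω => by rcases h01 ω with h | h <;> simp [h])

theorem integral_sum_sq {Y : ι → Ω → ℝ} (hY : ∀ i, MemLp (Y i) 2 μ) :
    ∫ ω, (∑ i, Y i ω) ^ 2 ∂μ = ∑ i, ∑ j, ∫ ω, Y i ω * Y j ω ∂μ := by
  have hYY : ∀ i j, Integrable (fun ω => Y i ω * Y j ω) μ := fun i j =>
    (hY i).integrable_mul (hY j)
  simp_rw [sq, Finset.sum_mul_sum]
  rw [integral_finsetSum _ fun i _ => integrable_finsetSum _ fun j _ => hYY i j]
  exact Finset.sum_congr rfl fun i _ => integral_finsetSum _ fun j _ => hYY i j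

theorem integral_sum_sq_le_of_integral_mul_le [IsFiniteMeasure μ] {Y : ι → Ω → ℝ} {q : ℝ}
    (hmeas : ∀ i, Measurable (Y i)) (h01 : ∀ i ω, Y i ω = 0 ∨ Y i ω = 1)
    (hq : ∀ i, ∫ ω, Y i ω ∂μ = q) (hneg : ∀ i j, i ≠ j → ∫ ω, Y i ω * Y j ω ∂μ ≤ q ^ 2) :
    ∫ ω, (∑ i, Y i ω) ^ 2 ∂μ ≤ Fintype.card ι * q + (Fintype.card ι * q) ^ 2 := by
  classical
  have hentry : ∀ i j, ∫ ω, Y i ω * Y j ω ∂μ ≤ (if i = j then q else 0) + q ^ 2 := by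
    intro i j
    by_cases hij : i = j
    · subst hij
      have hidem : (fun ω => Y i ω * Y i ω) = Y i := by
        ext ω; rcases h01 i ω with h | h <;> simp [h]
      simp [hidem, hq, sq_nonneg]
    · simpa [hij] using hneg i j hij
  calc ∫ ω, (∑ i, Y i ω) ^ 2 ∂μ
      = ∑ i, ∑ j, ∫ ω, Y i ω * Y j ω ∂μ :=
        integral_sum_sq fun i => memLp_of_forall_eq_zero_or_one (hmeas i) (h01 i)
    _ ≤ ∑ i : ι, ∑ j : ι, ((if i = j then q else 0) + q ^ 2) :=
        Finset.sum_le_sum fun i _ => Finset.sum_le_sum fun j _ => hentry i j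
    _ = _ := by simp [Finset.sum_add_distrib]; ring

end IndicatorSums

/-- Paley–Zygmund-type bound for pairwise negatively correlated
indicator random variables. -/
theorem paley_zygmund_indicators {Ω : Type*} [MeasurableSpace Ω] (μ : Measure Ω)
    [IsProbabilityMeasure μ] (m : ℕ) (Y : Fin m → Ω → ℝ) (q : ℝ)
    (hmeas : ∀ i, Measurable (Y i))
    (h01 : ∀ i ω, Y i ω = 0 ∨ Y i ω = 1)
    (hq : ∀ i, ∫ ω, Y i ω ∂μ = q)
    (hneg : ∀ i j, i ≠ j → ∫ ω, Y i ω * Y j ω ∂μ ≤ q ^ 2)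
    (hmq : 1 ≤ (m : ℝ) * q) :
    ENNReal.ofReal (1 / 8) ≤ μ {ω | (m : ℝ) * q / 2 < ∑ i, Y i ω} := by
  have hYL2 : ∀ i, MemLp (Y i) 2 μ := fun i => memLp_of_forall_eq_zero_or_one (hmeas i) (h01 i)
  have hsum0 : 0 ≤ fun ω => ∑ i, Y i ω := fun ω =>
    Finset.sum_nonneg fun i _ => (h01 i ω).elim (fun h => h.ge) fun h => h ▸ zero_le_one
  have hmean : ∫ ω, ∑ i, Y i ω ∂μ = m * q := by
    rw [integral_finsetSum _ fun i _ => (hYL2 i).integrable one_le_two]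
    simp [hq]
  have hsecond : ∫ ω, (∑ i, Y i ω) ^ 2 ∂μ ≤ 2 * (m * q) ^ 2 := by
    have := integral_sum_sq_le_of_integral_mul_le hmeas h01 hq hneg
    rw [Fintype.card_fin] at this
    nlinarith
  have hpz := paley_zygmund (Finset.measurable_sum _ fun i _ => hmeas i)
    (memLp_finsetSum _ fun i _ => hYL2 i) hsum0 (θ := 1 / 2) (by norm_num) (by norm_num)
  rw [hmean] at hpz
  have hset : {ω | 1 / 2 * (m * q) < ∑ i, Y i ω} = {ω | (m : ℝ) * q / 2 < ∑ i, Y i ω} := by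
    ext ω; rw [one_div_mul_eq_div]
  rw [hset] at hpz
  refine ENNReal.ofReal_le_of_le_toReal (?_ : 1 / 8 ≤ μ.real _)
  have hmq2 : 0 < ((m : ℝ) * q) ^ 2 := by positivity
  nlinarith [hpz.trans (mul_le_mul_of_nonneg_right hsecond measureReal_nonneg)]
end

section
/- Let n, d, t be reals with d ≥ 1, t ≥ 1, n ≥ e·d, let 0 < δ ≤ 1, let c_α > 0 and c_Z ≥ 12, and define α(m, d, δ, β) := c_α·( sqrt( β·(d·ln(1/β) + ln(1/δ)) / m ) + (d·ln(m/d) + ln(1/δ)) / m ) and Z_t := c_Z·t·ln²(n/d)·(d·ln(n/d) + ln(1/δ)) / n. Then for every real x with Z_t/2 ≤ x < 1, it holds that α(n/t, d, δ, x) ≤ (2·c_α/sqrt(c_Z)) · x / ln(1/x). -/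
/-- The accuracy function `α(m, d, δ, β)` from Algorithm 2. -/
noncomputable def alphaFn (cα m d δ β : ℝ) : ℝ :=
  cα * (Real.sqrt (β * (d * Real.log (1 / β) + Real.log (1 / δ)) / m) +
    (d * Real.log (m / d) + Real.log (1 / δ)) / m)

/-- The threshold `Z_t` from Algorithm 2. -/
noncomputable def Zt (cZ t n d δ : ℝ) : ℝ :=
  cZ * t * (Real.log (n / d)) ^ 2 * (d * Real.log (n / d) + Real.log (1 / δ)) / n

set_option maxHeartbeats 1000000 in
/-- for `x ≥ Z_t/2`, `α(n/t, d, δ, x) ≤ (2 c_α / √c_Z) · x / ln(1/x)`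
(Observation 4). -/
theorem alpha_bound (n d t δ cα cZ : ℝ)
    (hd : 1 ≤ d) (ht : 1 ≤ t) (hn : Real.exp 1 * d ≤ n)
    (hδ0 : 0 < δ) (hδ1 : δ ≤ 1) (hcα : 0 < cα) (hcZ : 12 ≤ cZ) :
    ∀ x : ℝ, Zt cZ t n d δ / 2 ≤ x → x < 1 →
      alphaFn cα (n / t) d δ x ≤ (2 * cα / Real.sqrt cZ) * (x / Real.log (1 / x)) := by
  intro x hZx hx1
  unfold Zt at hZx
  unfold alphaFn
  have hd0 : (0:ℝ) < d := lt_of_lt_of_le one_pos hd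
  have ht0 : (0:ℝ) < t := lt_of_lt_of_le one_pos ht
  have hcZ0 : (0:ℝ) < cZ := by linarith
  have hn0 : (0:ℝ) < n := lt_of_lt_of_le (mul_pos (Real.exp_pos 1) hd0) hn
  set L := Real.log (n / d) with hLdef
  set s := Real.log (1 / δ) with hsdef
  have hnd0 : (0:ℝ) < n / d := div_pos hn0 hd0
  have hnd : Real.exp 1 ≤ n / d := (le_div_iff₀ hd0).mpr hn
  have hL1 : 1 ≤ L := by
    rw [hLdef]
    exact (Real.le_log_iff_exp_le hnd0).mpr hnd
  have hL0 : (0:ℝ) < L := lt_of_lt_of_le one_pos hL1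
  have hs0 : (0:ℝ) ≤ s := Real.log_nonneg (one_le_one_div hδ0 hδ1)
  have hD0 : (0:ℝ) < d * L + s := by nlinarith
  -- clear denominators in the hypothesis on x
  have hZx1 : cZ * t * L ^ 2 * (d * L + s) / n ≤ x * 2 := (div_le_iff₀ two_pos).mp hZx
  have hZx2 : cZ * t * L ^ 2 * (d * L + s) ≤ x * 2 * n := (div_le_iff₀ hn0).mp hZx1
  have hA0 : (0:ℝ) < cZ * t * L ^ 2 * (d * L + s) :=
    mul_pos (mul_pos (mul_pos hcZ0 ht0) (pow_pos hL0 2)) hD0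
  have hx0 : (0:ℝ) < x := by nlinarith
  have hL2 : (1:ℝ) ≤ L ^ 2 := by nlinarith
  -- d ≤ n * x, hence log(1/x) ≤ L
  have h12 : 12 * d ≤ cZ * t * L ^ 2 * (d * L + s) := by
    have hDd : d ≤ d * L + s := by nlinarith
    have hct : (12:ℝ) ≤ cZ * t := by nlinarith
    have hcZt : (12:ℝ) ≤ cZ * t * L ^ 2 := by nlinarith [mul_nonneg (mul_nonneg hcZ0.le ht0.le) (sub_nonneg.mpr hL2)]
    calc 12 * d ≤ 12 * (d * L + s) := by nlinarith
      _ ≤ cZ * t * L ^ 2 * (d * L + s) := mul_le_mul_of_nonneg_right hcZt hD0.le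
  have hdnx : d ≤ n * x := by linarith
  set l := Real.log (1 / x) with hldef
  have hl0 : (0:ℝ) < l := Real.log_pos (one_lt_one_div hx0 hx1)
  have hlL : l ≤ L := by
    rw [hldef, hLdef]
    apply Real.log_le_log (by positivity)
    rw [div_le_div_iff₀ hx0 hd0]
    nlinarith
  set m := n / t with hmdef
  have hm0 : (0:ℝ) < m := div_pos hn0 ht0
  -- main consequence of x ≥ Z_t / 2
  have hDm : (d * L + s) * (cZ * L ^ 2) ≤ x * (2 * m) := by
    rw [hmdef, show x * (2 * (n / t)) = (x * 2 * n) / t by ring, le_div_iff₀ ht0]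
    calc (d * L + s) * (cZ * L ^ 2) * t = cZ * t * L ^ 2 * (d * L + s) := by ring
      _ ≤ x * 2 * n := hZx2
  -- bound on the second term
  have hT2 : (d * Real.log (m / d) + s) / m ≤ 2 / cZ * (x / l) := by
    have hmn : m / d ≤ n / d := by
      gcongr
      exact div_le_self hn0.le ht
    have hE : d * Real.log (m / d) + s ≤ d * L + s := by
      have := Real.log_le_log (div_pos hm0 hd0) hmn
      nlinarith
    have key2 : (d * L + s) * (cZ * l) ≤ x * (2 * m) := by
      refine le_trans ?_ hDm
      apply mul_le_mul_of_nonneg_left ?_ hD0.le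
      have hLL2 : L ≤ L ^ 2 := by nlinarith [mul_nonneg hL0.le (sub_nonneg.mpr hL1)]
      have : l ≤ L ^ 2 := hlL.trans hLL2
      exact mul_le_mul_of_nonneg_left this hcZ0.le
    rw [div_le_iff₀ hm0, show 2 / cZ * (x / l) * m = (2 * x * m) / (cZ * l) by ring,
      le_div_iff₀ (by positivity)]
    calc (d * Real.log (m / d) + s) * (cZ * l) ≤ (d * L + s) * (cZ * l) :=
          mul_le_mul_of_nonneg_right hE (by positivity)
      _ ≤ x * (2 * m) := key2
      _ = 2 * x * m := by ring
  -- bound on the sqrt term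
  have stepa : x * (d * l + s) / m ≤ 2 * x ^ 2 / (cZ * l ^ 2) := by
    have h1 : d * l + s ≤ d * L + s := by nlinarith
    have h2 : cZ * l ^ 2 ≤ cZ * L ^ 2 := by
      have : l ^ 2 ≤ L ^ 2 := pow_le_pow_left₀ hl0.le hlL 2
      exact mul_le_mul_of_nonneg_left this hcZ0.le
    have h3 : (d * l + s) * (cZ * l ^ 2) ≤ (d * L + s) * (cZ * L ^ 2) :=
      mul_le_mul h1 h2 (by positivity) hD0.le
    have h4 : (d * l + s) * (cZ * l ^ 2) ≤ x * (2 * m) := h3.trans hDm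
    have h5 : x * ((d * l + s) * (cZ * l ^ 2)) ≤ x * (x * (2 * m)) :=
      mul_le_mul_of_nonneg_left h4 hx0.le
    rw [div_le_div_iff₀ hm0 (by positivity)]
    calc x * (d * l + s) * (cZ * l ^ 2) = x * ((d * l + s) * (cZ * l ^ 2)) := by ring
      _ ≤ x * (x * (2 * m)) := h5
      _ = 2 * x ^ 2 * m := by ring
  have s2 : Real.sqrt 2 ^ 2 = 2 := Real.sq_sqrt (by norm_num)
  have sc : Real.sqrt cZ ^ 2 = cZ := Real.sq_sqrt hcZ0.le
  have scpos : (0:ℝ) < Real.sqrt cZ := Real.sqrt_pos.mpr hcZ0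
  have hb : (Real.sqrt 2 / Real.sqrt cZ * (x / l)) ^ 2 = 2 * x ^ 2 / (cZ * l ^ 2) := by
    rw [mul_pow, div_pow, div_pow, s2, sc]
    ring
  have hT1 : Real.sqrt (x * (d * l + s) / m) ≤ Real.sqrt 2 / Real.sqrt cZ * (x / l) := by
    calc Real.sqrt (x * (d * l + s) / m)
        ≤ Real.sqrt ((Real.sqrt 2 / Real.sqrt cZ * (x / l)) ^ 2) :=
          Real.sqrt_le_sqrt (by rw [hb]; exact stepa)
      _ = Real.sqrt 2 / Real.sqrt cZ * (x / l) := Real.sqrt_sq (by positivity)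
  -- the numeric inequality √2/√cZ + 2/cZ ≤ 2/√cZ
  have aux : Real.sqrt 2 / Real.sqrt cZ + 2 / cZ ≤ 2 / Real.sqrt cZ := by
    have ha : Real.sqrt 2 ≤ 1.415 := by
      nlinarith [Real.sqrt_nonneg 2, s2]
    have hb3 : (3.46:ℝ) ≤ Real.sqrt cZ := by
      nlinarith [Real.sqrt_nonneg cZ, sc]
    rw [div_add_div _ _ (ne_of_gt scpos) (ne_of_gt hcZ0), div_le_div_iff₀
      (by positivity) scpos]
    have h2a : (0.585:ℝ) ≤ 2 - Real.sqrt 2 := by linarith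
    have hprod : (0.585:ℝ) * 3.46 ≤ (2 - Real.sqrt 2) * Real.sqrt cZ :=
      mul_le_mul h2a hb3 (by norm_num) (by linarith)
    have hab : (2:ℝ) ≤ (2 - Real.sqrt 2) * Real.sqrt cZ := by nlinarith
    nlinarith [mul_nonneg hcZ0.le (sub_nonneg.mpr hab), sc]
  -- combine
  have hxl0 : (0:ℝ) ≤ x / l := by positivity
  calc cα * (Real.sqrt (x * (d * l + s) / m) + (d * Real.log (m / d) + s) / m)
      ≤ cα * (Real.sqrt 2 / Real.sqrt cZ * (x / l) + 2 / cZ * (x / l)) :=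
        mul_le_mul_of_nonneg_left (add_le_add hT1 hT2) hcα.le
    _ = cα * ((Real.sqrt 2 / Real.sqrt cZ + 2 / cZ) * (x / l)) := by ring
    _ ≤ cα * (2 / Real.sqrt cZ * (x / l)) :=
        mul_le_mul_of_nonneg_left (mul_le_mul_of_nonneg_right aux hxl0) hcα.le
    _ = 2 * cα / Real.sqrt cZ * (x / l) := by ring
end

section
/- Let D be a probability measure on X × {-1,1}, let h_1, h_2 : X → {-1,1} be measurable, set p := D({(x,y) : h_1(x) ≠ h_2(x)}), and let τ ≥ 0 be a real number. Assume p ≤ 1/2, p ≤ 4τ, τ ≤ 1/16, and er_D(h_1) + er_D(h_2) ≤ 2τ + p/2. Let D_= denote the conditional probability measure of D given the event {(x,y) : h_1(x) = h_2(x)}. Then er_{D_=}(h_1) + er_{D_=}(h_2) ≤ 2τ - p/4; in particular min{ er_{D_=}(h_1), er_{D_=}(h_2) } ≤ τ - p/8. -/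
open MeasureTheory ProbabilityTheory

/-! Off the agreement event exactly one of `h₁, h₂` errs, because there are only two labels.
Hence `er(h₁) + er(h₂) = D(err₁ ∩ {h₁ = h₂}) + D(err₂ ∩ {h₁ = h₂}) + p`, and conditioning on
`{h₁ = h₂}` divides the first two terms by `1 - p`. The bound on the sum of the errors then
reduces to `(2τ - p/2) / (1 - p) ≤ 2τ - p/4`, an elementary inequality for `τ ≤ 1/8`. -/

theorem Label.ne_iff_eq_of_ne : ∀ {a b : Label} (c : Label), a ≠ b → (a ≠ c ↔ b = c) := by
  decide

theorem div_one_sub_le_of_le {a p τ : ℝ} (hp0 : 0 ≤ p) (hp1 : p < 1) (hτ : τ ≤ 1 / 8)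
    (ha : a ≤ 2 * τ - p / 2) : a / (1 - p) ≤ 2 * τ - p / 4 := by
  rw [div_le_iff₀ (by linarith)]
  nlinarith

theorem error_inter_disagree {X : Type*} (h₁ h₂ : X → Label) :
    {q : X × Label | h₁ q.1 ≠ q.2} ∩ {q | h₁ q.1 ≠ h₂ q.1} =
      {q : X × Label | h₂ q.1 ≠ q.2}ᶜ ∩ {q | h₁ q.1 ≠ h₂ q.1} :=
  Set.ext fun q => and_congr_left fun hne => (Label.ne_iff_eq_of_ne q.2 hne).trans not_not.symm

section Errors

variable {X : Type*} [MeasurableSpace X]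

theorem measurableSet_error {h : X → Label} (hm : Measurable h) :
    MeasurableSet {q : X × Label | h q.1 ≠ q.2} :=
  (measurableSet_eq_fun (hm.comp measurable_fst) measurable_snd).compl

theorem erD_add_measure (μ ν : Measure (X × Label)) [IsFiniteMeasure μ] [IsFiniteMeasure ν]
    (h : X → Label) : erD (μ + ν) h = erD μ h + erD ν h := by
  simp only [erD, Measure.add_apply,
    ENNReal.toReal_add (measure_ne_top _ _) (measure_ne_top _ _)]

theorem erD_eq_erD_restrict_add_erD_restrict_compl (μ : Measure (X × Label))
    [IsFiniteMeasure μ] {s : Set (X × Label)} (hs : MeasurableSet s) (h : X → Label) :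
    erD μ h = erD (μ.restrict s) h + erD (μ.restrict sᶜ) h := by
  rw [← erD_add_measure, Measure.restrict_add_restrict_compl hs]

theorem erD_cond (μ : Measure (X × Label)) (s : Set (X × Label)) (h : X → Label) :
    erD μ[|s] h = (μ s).toReal⁻¹ * erD (μ.restrict s) h := by
  simp only [erD, ProbabilityTheory.cond, Measure.smul_apply, smul_eq_mul, ENNReal.toReal_mul,
    ENNReal.toReal_inv]

theorem erD_restrict_disagree_add (μ : Measure (X × Label)) [IsFiniteMeasure μ]
    {h₁ h₂ : X → Label} (hm₁ : Measurable h₁) (hm₂ : Measurable h₂) :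
    erD (μ.restrict {q | h₁ q.1 ≠ h₂ q.1}) h₁ + erD (μ.restrict {q | h₁ q.1 ≠ h₂ q.1}) h₂ =
      (μ {q | h₁ q.1 ≠ h₂ q.1}).toReal := by
  have hB : MeasurableSet {q : X × Label | h₁ q.1 ≠ h₂ q.1} :=
    (measurableSet_eq_fun (hm₁.comp measurable_fst) (hm₂.comp measurable_fst)).compl
  have hsum : μ.restrict {q | h₁ q.1 ≠ h₂ q.1} {q | h₁ q.1 ≠ q.2} +
      μ.restrict {q | h₁ q.1 ≠ h₂ q.1} {q | h₂ q.1 ≠ q.2} = μ {q | h₁ q.1 ≠ h₂ q.1} := by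
    rw [Measure.restrict_apply' hB, error_inter_disagree, ← Measure.restrict_apply' hB, add_comm,
      measure_add_measure_compl (measurableSet_error hm₂), Measure.restrict_apply_univ]
  rw [erD, erD, ← ENNReal.toReal_add (measure_ne_top _ _) (measure_ne_top _ _), hsum]

end Errors

theorem disagreeing_experts_progress_general {X : Type*} [MeasurableSpace X]
    (D : Measure (X × Label)) [IsProbabilityMeasure D]
    (h1 h2 : X → Label) (hm1 : Measurable h1) (hm2 : Measurable h2)
    (p τ : ℝ) (hpdef : p = (D {q : X × Label | h1 q.1 ≠ h2 q.1}).toReal)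
    (hp2 : p ≤ 1 / 2) (hτ16 : τ ≤ 1 / 16)
    (hsum : erD D h1 + erD D h2 ≤ 2 * τ + p / 2) :
    erD (D[|{q : X × Label | h1 q.1 = h2 q.1}]) h1 +
        erD (D[|{q : X × Label | h1 q.1 = h2 q.1}]) h2 ≤ 2 * τ - p / 4 ∧
      min (erD (D[|{q : X × Label | h1 q.1 = h2 q.1}]) h1)
          (erD (D[|{q : X × Label | h1 q.1 = h2 q.1}]) h2) ≤ τ - p / 8 := by
  set A : Set (X × Label) := {q | h1 q.1 = h2 q.1}
  have hA : MeasurableSet A :=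
    measurableSet_eq_fun (hm1.comp measurable_fst) (hm2.comp measurable_fst)
  have hAc : Aᶜ = {q | h1 q.1 ≠ h2 q.1} := rfl
  have hp0 : 0 ≤ p := hpdef ▸ ENNReal.toReal_nonneg
  have hDA : (D A).toReal = 1 - p := by
    have := probReal_compl_eq_one_sub (μ := D) hA
    rw [measureReal_def, measureReal_def, hAc, ← hpdef] at this
    linarith
  have hagree : erD (D.restrict A) h1 + erD (D.restrict A) h2 ≤ 2 * τ - p / 2 := by
    rw [erD_eq_erD_restrict_add_erD_restrict_compl D hA h1,
      erD_eq_erD_restrict_add_erD_restrict_compl D hA h2, hAc] at hsum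
    linarith [erD_restrict_disagree_add D hm1 hm2]
  have hcond : erD D[|A] h1 + erD D[|A] h2 ≤ 2 * τ - p / 4 := by
    rw [erD_cond, erD_cond, hDA, ← mul_add, inv_mul_eq_div]
    exact div_one_sub_le_of_le hp0 (by linarith) (by linarith) hagree
  exact ⟨hcond, min_le_of_add_le_two_nsmul (by rw [two_nsmul]; linarith)⟩

/-- two near-optimal hypotheses that disagree with probability `p` have a
noticeably smaller error under the conditional distribution on their agreement event. -/
theorem disagreeing_experts_progress {X : Type*} [MeasurableSpace X]
    (D : Measure (X × Label)) [IsProbabilityMeasure D]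
    (h1 h2 : X → Label) (hm1 : Measurable h1) (hm2 : Measurable h2)
    (p τ : ℝ) (hpdef : p = (D {q : X × Label | h1 q.1 ≠ h2 q.1}).toReal)
    (hτ0 : 0 ≤ τ) (hp2 : p ≤ 1 / 2) (hp4 : p ≤ 4 * τ) (hτ16 : τ ≤ 1 / 16)
    (hsum : erD D h1 + erD D h2 ≤ 2 * τ + p / 2) :
    erD (D[|{q : X × Label | h1 q.1 = h2 q.1}]) h1 +
        erD (D[|{q : X × Label | h1 q.1 = h2 q.1}]) h2 ≤ 2 * τ - p / 4 ∧
      min (erD (D[|{q : X × Label | h1 q.1 = h2 q.1}]) h1)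
          (erD (D[|{q : X × Label | h1 q.1 = h2 q.1}]) h2) ≤ τ - p / 8 :=
  disagreeing_experts_progress_general D h1 h2 hm1 hm2 p τ hpdef hp2 hτ16 hsum
end
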